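/- arXiv:1608.06998 — 4 statements merged into one kernel-verified Lean document; each statement's English description precedes it below -/
import Mathlib

section
/- For any fixed real y ≥ 2, the function g(x,y) = f(x+1,y) - f(x,y) is increasing in x for x ≥ 1, where f(x,y) = sqrt((x+y-2)/(x·y)). -/
/-!
With `a = 1 / y` and `b = (y - 2) / y`, the function in question is `x ↦ f (x + 1) - f x` for
`f x = √(a + b / x)`. Since `b ≥ 0`, the derivative `f' x = -b / (2 √(x³ (a x + b)))` increases
on `(0, ∞)`, so `f` is convex there, and forward differences of a convex function are monotone.
-/

open Set Real fwdDiff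

theorem ConvexOn.monotoneOn_fwdDiff {𝕜 : Type*} [Field 𝕜] [LinearOrder 𝕜]
    [IsStrictOrderedRing 𝕜] {s : Set 𝕜} {f : 𝕜 → 𝕜} (hf : ConvexOn 𝕜 s f) {h : 𝕜} (hh : 0 < h) :
    MonotoneOn (Δ_[h] f) {x | x ∈ s ∧ x + h ∈ s} := by
  rintro a ⟨ha, hah⟩ b ⟨hb, hbh⟩ hab
  rcases hab.eq_or_lt with rfl | hab
  · exact le_rfl
  -- compare both secants with the chord from `a` to `b + h`
  have left : (f (a + h) - f a) / h ≤ (f (b + h) - f a) / (b + h - a) := by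
    simpa using hf.secant_mono ha hah hbh (by linarith) (by linarith) (by linarith)
  have right : (f (b + h) - f a) / (b + h - a) ≤ (f (b + h) - f b) / h := by
    convert hf.secant_mono hbh ha hb (by linarith) (by linarith) hab.le using 1 <;>
      rw [← neg_div_neg_eq] <;> ring_nf
  exact (div_le_div_iff_of_pos_right hh).mp (left.trans right)

theorem hasDerivAt_sqrt_add_div {a b x : ℝ} (hx : 0 < x) (hax : 0 < a * x + b) :
    HasDerivAt (fun x => √(a + b / x)) (-b / (2 * √(x ^ 3 * (a * x + b)))) x := by
  have hpos : 0 < a + b / x := by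
    rw [← mul_pos_iff_of_pos_right hx, add_mul, div_mul_cancel₀ b hx.ne']
    exact hax
  have hsqrt : √(x ^ 3 * (a * x + b)) = x ^ 2 * √(a + b / x) := by
    rw [show x ^ 3 * (a * x + b) = (x ^ 2) ^ 2 * (a + b / x) by field_simp,
      sqrt_mul (by positivity), sqrt_sq (by positivity)]
  have hinner : HasDerivAt (fun x => a + b / x) (-b / x ^ 2) x := by
    simpa [div_eq_mul_inv, neg_div, mul_neg] using
      ((hasDerivAt_inv hx.ne').const_mul b).const_add a
  refine (hinner.sqrt hpos.ne').congr_deriv ?_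
  rw [hsqrt]
  field_simp

theorem convexOn_sqrt_add_div {a b : ℝ} (ha : 0 < a) (hb : 0 ≤ b) :
    ConvexOn ℝ (Ioi 0) (fun x => √(a + b / x)) := by
  have hderiv : ∀ x : ℝ, 0 < x →
      HasDerivAt (fun x => √(a + b / x)) (-b / (2 * √(x ^ 3 * (a * x + b)))) x :=
    fun x hx => hasDerivAt_sqrt_add_div hx (by positivity)
  refine MonotoneOn.convexOn_of_deriv (convex_Ioi 0)
    (fun x hx => (hderiv x hx).continuousAt.continuousWithinAt) ?_ ?_ <;> rw [interior_Ioi]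
  · exact fun x hx => (hderiv x hx).differentiableAt.differentiableWithinAt
  · intro x (hx : 0 < x) x' (hx' : 0 < x') hxx'
    rw [(hderiv x hx).deriv, (hderiv x' hx').deriv, neg_div, neg_div, neg_le_neg_iff]
    gcongr

theorem g_monotone_of_y_ge_two (y : ℝ) (hy : 2 ≤ y) :
    MonotoneOn (fun x : ℝ =>
      Real.sqrt ((x + 1 + y - 2) / ((x + 1) * y)) - Real.sqrt ((x + y - 2) / (x * y)))
      (Set.Ici 1) := by
  have hy0 : 0 < y := by linarith
  have hconv : ConvexOn ℝ (Ioi 0) (fun x => √(y⁻¹ + (y - 2) / y / x)) :=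
    convexOn_sqrt_add_div (inv_pos.mpr hy0) (div_nonneg (by linarith) hy0.le)
  have hform : ∀ t : ℝ, 0 < t → y⁻¹ + (y - 2) / y / t = (t + y - 2) / (t * y) := by
    intro t ht
    field_simp
    ring
  refine ((hconv.monotoneOn_fwdDiff one_pos).mono ?_).congr ?_
  · intro x (hx : 1 ≤ x)
    exact ⟨mem_Ioi.mpr (by linarith), mem_Ioi.mpr (by linarith)⟩
  · intro x (hx : 1 ≤ x)
    simp only [fwdDiff, hform x (by linarith), hform (x + 1) (by linarith)]
end

section
/- For any fixed real m ≥ 1 and reals x₁ ≥ x₂ ≥ 1, we have F(x₁+1) - F(x₁) > F(x₂) - F(x₂-1), where F(x) = x·sqrt((x+m-1)/(x+m)). -/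
/-!
With `r = √((x + m - 1) / (x + m))` one computes
`F'' = (4m(x + m - 1) - x) / (4 r³ (x + m)⁴)`, whose numerator equals
`(4m - 1)(x + m - 1) + (m - 1) > 0` for `x > 1 - m`, so `F` is strictly convex on `[1 - m, ∞)`.
Increments of a strictly convex function over intervals of equal length strictly increase, and
the interval `[x₂ - 1, x₂]` starts strictly to the left of `[x₁, x₁ + 1]`.
-/

open Real Set

theorem StrictConvexOn.increment_lt_increment {𝕜 : Type*} [Field 𝕜] [LinearOrder 𝕜]
    [IsStrictOrderedRing 𝕜] {s : Set 𝕜} {f : 𝕜 → 𝕜} (hf : StrictConvexOn 𝕜 s f) {a b h : 𝕜}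
    (ha : a ∈ s) (hb : b + h ∈ s) (hh : 0 < h) (hab : a < b) :
    f (a + h) - f a < f (b + h) - f b := by
  have hmem : Icc a (b + h) ⊆ s := hf.1.ordConnected.out ha hb
  have h₁ := hf.secant_strict_mono ha (hmem ⟨by linarith, by linarith⟩) hb (by linarith)
    (by linarith) (by linarith : a + h < b + h)
  have h₂ := hf.secant_strict_mono hb ha (hmem ⟨hab.le, by linarith⟩) (by linarith)
    (by linarith) hab
  simp only [← slope_def_field, slope_comm f (b + h)] at h₁ h₂
  have key := h₁.trans h₂
  rwa [slope_def_field, slope_def_field, add_sub_cancel_left, add_sub_cancel_left,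
    div_lt_div_iff_of_pos_right hh] at key

theorem strictConvexOn_of_hasDerivAt2_pos {D : Set ℝ} (hD : Convex ℝ D) {f f' f'' : ℝ → ℝ}
    (hf : ContinuousOn f D) (hf' : ∀ x ∈ interior D, HasDerivAt f (f' x) x)
    (hf'' : ∀ x ∈ interior D, HasDerivAt f' (f'' x) x) (hf''₀ : ∀ x ∈ interior D, 0 < f'' x) :
    StrictConvexOn ℝ D f := by
  refine strictConvexOn_of_deriv2_pos hD hf fun x hx ↦ ?_
  have hderiv : deriv f =ᶠ[nhds x] f' :=
    Filter.eventually_of_mem (isOpen_interior.mem_nhds hx) fun y hy ↦ (hf' y hy).deriv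
  rw [Function.iterate_succ_apply, Function.iterate_one, hderiv.deriv_eq, (hf'' x hx).deriv]
  exact hf''₀ x hx

noncomputable def F (m x : ℝ) : ℝ := x * √((x + m - 1) / (x + m))

section Derivatives

variable {m x : ℝ}

theorem hasDerivAt_sqrt_ratio (hx : 1 < x + m) :
    HasDerivAt (fun y ↦ √((y + m - 1) / (y + m)))
      (1 / (2 * √((x + m - 1) / (x + m)) * (x + m) ^ 2)) x := by
  have hq : HasDerivAt (fun y ↦ (y + m - 1) / (y + m)) (1 / (x + m) ^ 2) x :=
    ((((hasDerivAt_id' x).add_const m).sub_const 1).fun_div ((hasDerivAt_id' x).add_const m)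
      (by linarith)).congr_deriv (by ring)
  exact (hq.sqrt (div_pos (by linarith) (by linarith)).ne').congr_deriv (by field_simp)

theorem hasDerivAt_F (hx : 1 < x + m) :
    HasDerivAt (F m)
      (√((x + m - 1) / (x + m)) + x / (2 * √((x + m - 1) / (x + m)) * (x + m) ^ 2)) x :=
  ((hasDerivAt_id' x).fun_mul (hasDerivAt_sqrt_ratio hx)).congr_deriv (by ring)

theorem hasDerivAt_F_second (hx : 1 < x + m) :
    HasDerivAt
      (fun y ↦ √((y + m - 1) / (y + m)) + y / (2 * √((y + m - 1) / (y + m)) * (y + m) ^ 2))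
      ((4 * m * (x + m - 1) - x) / (4 * √((x + m - 1) / (x + m)) ^ 3 * (x + m) ^ 4)) x := by
  have hr := hasDerivAt_sqrt_ratio hx
  have hxm : 0 < x + m := by linarith
  have hpos : 0 < √((x + m - 1) / (x + m)) := sqrt_pos.2 (div_pos (by linarith) hxm)
  have hsq : √((x + m - 1) / (x + m)) ^ 2 = (x + m - 1) / (x + m) := sq_sqrt (by positivity)
  refine (hr.fun_add ((hasDerivAt_id' x).fun_div ((hr.const_mul 2).fun_mul
    (((hasDerivAt_id' x).add_const m).fun_pow 2)) (by positivity))).congr_deriv ?_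
  field_simp
  rw [hsq]
  field_simp
  ring

end Derivatives

theorem strictConvexOn_F {m : ℝ} (hm : 1 ≤ m) : StrictConvexOn ℝ (Ici (1 - m)) (F m) := by
  have hcont : ContinuousOn (F m) (Ici (1 - m)) := by
    unfold F
    fun_prop (disch := intro x hx; simp only [mem_Ici] at hx; linarith)
  refine strictConvexOn_of_hasDerivAt2_pos (convex_Ici _) hcont
    (fun x hx ↦ hasDerivAt_F ?_) (fun x hx ↦ hasDerivAt_F_second ?_) fun x hx ↦ ?_
  all_goals rw [interior_Ici, mem_Ioi] at hx
  · linarith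
  · linarith
  have hxm : 0 < x + m := by linarith
  have hr : 0 < √((x + m - 1) / (x + m)) := sqrt_pos.2 (div_pos (by linarith) hxm)
  exact div_pos (by nlinarith) (by positivity)

theorem F_increment_inequality (m : ℝ) (hm : 1 ≤ m) (x₁ x₂ : ℝ)
    (hx₂ : 1 ≤ x₂) (hx : x₂ ≤ x₁) :
    (x₁ + 1) * Real.sqrt ((x₁ + 1 + m - 1) / (x₁ + 1 + m)) -
      x₁ * Real.sqrt ((x₁ + m - 1) / (x₁ + m)) >
    x₂ * Real.sqrt ((x₂ + m - 1) / (x₂ + m)) -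
      (x₂ - 1) * Real.sqrt ((x₂ - 1 + m - 1) / (x₂ - 1 + m)) := by
  have h := (strictConvexOn_F hm).increment_lt_increment (a := x₂ - 1) (b := x₁) (h := 1)
    (by rw [mem_Ici]; linarith) (by rw [mem_Ici]; linarith) one_pos (by linarith)
  rwa [sub_add_cancel] at h
end

section
/- Let G be a connected simple graph on n vertices with independence number β. Then ABC(G) ≤ β(n-β)·sqrt((2n-β-3)/((n-β)(n-1))) + ((n-β)(n-β-1)/2)·sqrt((2n-4)/((n-1)²)), with equality if and only if G is isomorphic to the join of the empty graph on β vertices with the complete graph K_{n-β}. -/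
/-- The degree of a vertex. -/
noncomputable def deg {V : Type*} (G : SimpleGraph V) (v : V) : ℕ :=
  Nat.card {w | G.Adj v w}

open scoped Classical in
/-- The atom-bond connectivity index:
`ABC(G) = ∑_{uv ∈ E(G)} sqrt((d(u)+d(v)-2)/(d(u)d(v)))`,
computed as half the sum over ordered adjacent pairs. -/
noncomputable def ABC {V : Type*} [Fintype V] (G : SimpleGraph V) : ℝ :=
  (∑ u : V, ∑ v : V, if G.Adj u v then
    Real.sqrt (((deg G u : ℝ) + (deg G v : ℝ) - 2) / ((deg G u : ℝ) * (deg G v : ℝ)))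
  else 0) / 2

open scoped Classical in
/-- The independence number: the largest size of a set of pairwise non-adjacent vertices. -/
noncomputable def indepNum {V : Type*} [Fintype V] (G : SimpleGraph V) : ℕ :=
  Finset.univ.sup fun s : Finset V =>
    if (∀ u ∈ s, ∀ v ∈ s, u ≠ v → ¬ G.Adj u v) then s.card else 0

/-- The join of the empty graph on `β` vertices with `K_{n-β}`:
the first `β` vertices are independent, the rest form a clique, with all cross edges. -/
def splitGraph (n β : ℕ) : SimpleGraph (Fin n) where
  Adj u v := u ≠ v ∧ (β ≤ u.val ∨ β ≤ v.val)
  symm := by constructor; intro u v h; exact ⟨h.1.symm, h.2.symm⟩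
  loopless := by constructor; intro u h; exact h.1 rfl

/-!
Adding an edge `xy` between non-adjacent vertices of positive degrees `p, q` strictly increases
ABC. Each of the `p` old edges at `x` loses at most `1/√p - 1/√(p+1)`, and
`p (1/√p - 1/√(p+1)) < 1/(2√(p+1))`; similarly at `y`. The new edge contributes
`√((p+q)/((p+1)(q+1))) ≥ (1/√(p+1) + 1/√(q+1))/2`, which outweighs both losses.

Relabelling a maximum independent set as `{0, …, β-1}` turns `G` into a spanning subgraph of the
join of the empty graph on `β` vertices with `K_{n-β}`, since every edge meets the clique part.
As `G` is connected, adding the missing edges one at a time increases ABC strictly unless none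
is missing.
-/

open Real

noncomputable def abcWeight (a b : ℝ) : ℝ := √((a + b - 2) / (a * b))

noncomputable def invSqrtDrop (d : ℝ) : ℝ := (√d)⁻¹ - (√(d + 1))⁻¹

lemma abcWeight_comm (a b : ℝ) : abcWeight a b = abcWeight b a := by
  rw [abcWeight, abcWeight, add_comm a, mul_comm a]

lemma sqrt_add_sub_sqrt_le {u₁ u₂ c₁ c₂ : ℝ} (hu : u₂ ≤ u₁) (hu₂ : 0 ≤ u₂) (hc₁ : 0 ≤ c₁)
    (hc : c₁ ≤ c₂) : √(u₁ + c₁) - √u₁ ≤ √(u₂ + c₂) - √u₂ := by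
  have hc₂ : 0 ≤ c₂ := hc₁.trans hc
  have hmul : √(u₁ + c₂) * √u₂ ≤ √u₁ * √(u₂ + c₂) := by
    rw [← sqrt_mul (by linarith), ← sqrt_mul (by linarith)]
    exact sqrt_le_sqrt (by nlinarith)
  have : √(u₁ + c₁) ≤ √(u₁ + c₂) := sqrt_le_sqrt (by linarith)
  nlinarith [sq_sqrt (show 0 ≤ u₁ + c₂ by linarith), sq_sqrt hu₂, sq_sqrt (hu₂.trans hu),
    sq_sqrt (show 0 ≤ u₂ + c₂ by linarith), sqrt_nonneg (u₁ + c₂), sqrt_nonneg u₂,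
    sqrt_nonneg u₁, sqrt_nonneg (u₂ + c₂)]

lemma abcWeight_sub_abcWeight_succ_le {d a : ℕ} (hd : 1 ≤ d) (ha : 1 ≤ a) :
    abcWeight d a - abcWeight (d + 1) a ≤ invSqrtDrop d := by
  have ha' : (1 : ℝ) ≤ a := by exact_mod_cast ha
  -- `d = 1` is separate: there the term `(d - 2) / (d * a)` used below is negative.
  rcases hd.eq_or_lt with rfl | hd
  · have h1 : abcWeight 1 a ≤ 1 := by
      rw [abcWeight, sqrt_le_one, div_le_one (by positivity)]
      linarith
    have h2 : abcWeight (1 + 1) a = (√(1 + 1))⁻¹ := by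
      rw [abcWeight, ← sqrt_inv]
      congr 1
      field_simp
      ring
    push_cast
    rw [h2, invSqrtDrop, sqrt_one, inv_one]
    linarith
  · have hd' : (2 : ℝ) ≤ d := by exact_mod_cast hd
    have e₁ : ((d : ℝ) + a - 2) / (d * a) = (d : ℝ)⁻¹ + (d - 2) / (d * a) := by
      field_simp; ring
    have e₂ : ((d : ℝ) + 1 + a - 2) / ((d + 1) * a) =
        ((d : ℝ) + 1)⁻¹ + (d - 1) / ((d + 1) * a) := by
      field_simp; ring
    have := sqrt_add_sub_sqrt_le (u₁ := (d : ℝ)⁻¹) (u₂ := ((d : ℝ) + 1)⁻¹)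
      (c₁ := (d - 2) / (d * a)) (c₂ := (d - 1) / ((d + 1) * a))
      (inv_anti₀ (by positivity) (by linarith)) (by positivity)
      (div_nonneg (by linarith) (by positivity))
      (by rw [div_le_div_iff₀ (by positivity) (by positivity)]; nlinarith)
    rw [abcWeight, abcWeight, e₁, e₂, invSqrtDrop, ← sqrt_inv, ← sqrt_inv]
    linarith

lemma mul_invSqrtDrop_lt {d : ℝ} (hd : 0 < d) :
    d * invSqrtDrop d < (√(d + 1))⁻¹ / 2 := by
  have hs := sqrt_pos.mpr hd
  have ht := sqrt_pos.mpr (show 0 < d + 1 by linarith)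
  have hst : d < √d * √(d + 1) := by
    rw [← sqrt_mul hd.le, lt_sqrt hd.le]; nlinarith
  -- `√(d + 1) - √d = 1 / (√(d + 1) + √d)`
  have key : 2 * d * (√(d + 1) - √d) < √d := by
    nlinarith [sq_sqrt hd.le, sq_sqrt (show 0 ≤ d + 1 by linarith)]
  calc d * invSqrtDrop d = 2 * d * (√(d + 1) - √d) / (2 * (√d * √(d + 1))) := by
        rw [invSqrtDrop]; field_simp
    _ < √d / (2 * (√d * √(d + 1))) := by gcongr
    _ = (√(d + 1))⁻¹ / 2 := by field_simp

lemma inv_sqrt_add_inv_sqrt_le_two_mul_abcWeight {p q : ℝ} (hp : 2 ≤ p) (hq : 2 ≤ q) :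
    (√p)⁻¹ + (√q)⁻¹ ≤ 2 * abcWeight p q := by
  have hsp := sqrt_pos.mpr (show 0 < p by linarith)
  have hsq := sqrt_pos.mpr (show 0 < q by linarith)
  have hr : √p + √q ≤ 2 * √(p + q - 2) := by
    nlinarith [sq_sqrt (show 0 ≤ p by linarith), sq_sqrt (show 0 ≤ q by linarith),
      sq_sqrt (show 0 ≤ p + q - 2 by linarith), sqrt_nonneg (p + q - 2), sq_nonneg (√p - √q)]
  rw [abcWeight, sqrt_div' _ (by positivity : 0 ≤ p * q), sqrt_mul (by linarith),
    inv_add_inv hsp.ne' hsq.ne', mul_div_assoc']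
  gcongr

section Graph

open Finset SimpleGraph
open scoped Classical

variable {V : Type*}

lemma deg_eq_degree [Fintype V] (G : SimpleGraph V) (v : V) : deg G v = G.degree v := by
  rw [deg, ← card_neighborSet_eq_degree, Nat.card_eq_fintype_card]
  rfl

lemma deg_iso {W : Type*} {G : SimpleGraph V} {H : SimpleGraph W} (φ : G ≃g H) (v : V) :
    deg H (φ v) = deg G v :=
  Nat.card_congr (Equiv.subtypeEquiv φ.toEquiv fun _ => φ.map_adj_iff.symm).symm

lemma ABC_iso {W : Type*} [Fintype V] [Fintype W] {G : SimpleGraph V} {H : SimpleGraph W}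
    (φ : G ≃g H) : ABC G = ABC H := by
  unfold ABC
  congr 1
  refine Fintype.sum_equiv φ.toEquiv _ _ fun u => Fintype.sum_equiv φ.toEquiv _ _ fun v => ?_
  simp only [RelIso.coe_fn_toEquiv, φ.map_adj_iff, deg_iso]

noncomputable def edgeWeight (G : SimpleGraph V) : Sym2 V → ℝ :=
  Sym2.lift ⟨fun u v => abcWeight (deg G u) (deg G v), fun _ _ => abcWeight_comm _ _⟩

lemma sum_sum_ite_adj_eq_two_nsmul_sum_edgeFinset [Fintype V] {M : Type*} [AddCommMonoid M]
    (G : SimpleGraph V) [Fintype G.edgeSet] (g : Sym2 V → M) :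
    ∑ u, ∑ v, (if G.Adj u v then g s(u, v) else 0) = 2 • ∑ e ∈ G.edgeFinset, g e := by
  rw [← Fintype.sum_prod_type', ← sum_filter, smul_sum,
    ← sum_fiberwise_of_maps_to (g := fun p => s(p.1, p.2)) (t := G.edgeFinset) (by simp)]
  refine sum_congr rfl fun e he => ?_
  induction e using Sym2.ind with
  | _ x y =>
  have hxy : x ≠ y := (mem_edgeFinset.mp he).ne
  have hfiber : {p ∈ univ.filter (fun p : V × V => G.Adj p.1 p.2) | s(p.1, p.2) = s(x, y)}
      = {(x, y), (y, x)} := by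
    ext ⟨a, b⟩
    simp only [mem_filter, mem_univ, true_and, Sym2.eq_iff, mem_insert, mem_singleton,
      Prod.mk.injEq]
    constructor
    · exact fun h => h.2
    · rintro (⟨rfl, rfl⟩ | ⟨rfl, rfl⟩)
      · exact ⟨mem_edgeFinset.mp he, by simp⟩
      · exact ⟨(mem_edgeFinset.mp he).symm, by simp⟩
  rw [hfiber, sum_pair (by simp [hxy]), Sym2.eq_swap, two_nsmul]

lemma ABC_eq_sum_edgeFinset [Fintype V] (G : SimpleGraph V) [Fintype G.edgeSet] :
    ABC G = ∑ e ∈ G.edgeFinset, edgeWeight G e := by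
  change (∑ u, ∑ v, if G.Adj u v then edgeWeight G s(u, v) else 0) / 2 = _
  rw [sum_sum_ite_adj_eq_two_nsmul_sum_edgeFinset, two_nsmul]
  ring

end Graph

section AddEdge

open Finset SimpleGraph
open scoped Classical

variable {V : Type*} {G : SimpleGraph V} {x y : V}

lemma one_le_deg_of_adj [Finite V] {u v : V} (h : G.Adj u v) : 1 ≤ deg G u :=
  Nat.card_pos_iff.mpr ⟨⟨⟨v, h⟩⟩, inferInstance⟩

lemma sup_edge_adj_iff (hxy : x ≠ y) {u v : V} :
    (G ⊔ edge x y).Adj u v ↔ G.Adj u v ∨ (u = x ∧ v = y ∨ u = y ∧ v = x) := by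
  rw [sup_adj, edge_adj]
  grind

lemma deg_sup_edge_left [Finite V] (hxy : x ≠ y) (hn : ¬G.Adj x y) :
    deg (G ⊔ edge x y) x = deg G x + 1 := by
  have : {w | (G ⊔ edge x y).Adj x w} = insert y {w | G.Adj x w} := by
    ext w
    simp [sup_edge_adj_iff hxy, hxy, or_comm]
  rw [deg, deg, Nat.card_coe_set_eq, Nat.card_coe_set_eq, this,
    Set.ncard_insert_of_notMem (s := {w | G.Adj x w}) hn]

lemma deg_sup_edge_right [Finite V] (hxy : x ≠ y) (hn : ¬G.Adj x y) :
    deg (G ⊔ edge x y) y = deg G y + 1 := by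
  rw [edge_comm]
  exact deg_sup_edge_left hxy.symm fun h => hn h.symm

lemma deg_sup_edge_of_ne (hxy : x ≠ y) {v : V} (hvx : v ≠ x) (hvy : v ≠ y) :
    deg (G ⊔ edge x y) v = deg G v := by
  unfold deg
  congr! 3 with w
  simp only [sup_edge_adj_iff hxy]
  grind

lemma edgeWeight_sub_edgeWeight_sup_edge_le [Finite V] (hxy : x ≠ y) (hn : ¬G.Adj x y)
    {e : Sym2 V} (he : e ∈ G.edgeSet) :
    edgeWeight G e - edgeWeight (G ⊔ edge x y) e ≤
      (if x ∈ e then invSqrtDrop (deg G x) else 0) +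
        (if y ∈ e then invSqrtDrop (deg G y) else 0) := by
  induction e using Sym2.ind with
  | _ u v =>
  rw [mem_edgeSet] at he
  wlog hv : v ≠ x ∧ v ≠ y generalizing u v
  · -- an edge of `G` has at most one end in `{x, y}`
    have huv := he.ne
    have hvu := he.symm
    rw [Sym2.eq_swap]
    exact this v u he.symm (by grind)
  obtain ⟨hvx, hvy⟩ := hv
  simp only [edgeWeight, Sym2.lift_mk, Sym2.mem_iff, deg_sup_edge_of_ne hxy hvx hvy,
    hvx.symm, hvy.symm, or_false]
  have hdrop := abcWeight_sub_abcWeight_succ_le (one_le_deg_of_adj he) (one_le_deg_of_adj he.symm)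
  by_cases hux : u = x
  · subst hux
    simpa [deg_sup_edge_left hxy hn, hxy.symm] using hdrop
  by_cases huy : u = y
  · subst huy
    simpa [deg_sup_edge_right hxy hn, hxy] using hdrop
  simp [deg_sup_edge_of_ne hxy hux huy, Ne.symm hux, Ne.symm huy]

lemma sum_edgeFinset_ite_mem [Fintype V] (G : SimpleGraph V) (z : V) (c : ℝ) :
    ∑ e ∈ G.edgeFinset, (if z ∈ e then c else 0) = deg G z * c := by
  rw [← sum_filter, ← incidenceFinset_eq_filter, sum_const, card_incidenceFinset_eq_degree,
    ← deg_eq_degree, nsmul_eq_mul]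

theorem ABC_lt_ABC_sup_edge [Fintype V] (hxy : x ≠ y) (hn : ¬G.Adj x y) (hx : 1 ≤ deg G x)
    (hy : 1 ≤ deg G y) : ABC G < ABC (G ⊔ edge x y) := by
  have hloss := sum_le_sum fun e he =>
    edgeWeight_sub_edgeWeight_sup_edge_le (G := G) hxy hn (mem_edgeFinset.mp he)
  rw [sum_sub_distrib, sum_add_distrib, sum_edgeFinset_ite_mem, sum_edgeFinset_ite_mem] at hloss
  have hnew : edgeWeight (G ⊔ edge x y) s(x, y) = abcWeight (deg G x + 1) (deg G y + 1) := by
    simp [edgeWeight, deg_sup_edge_left hxy hn, deg_sup_edge_right hxy hn]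
  have hx' : (1 : ℝ) ≤ deg G x := by exact_mod_cast hx
  have hy' : (1 : ℝ) ≤ deg G y := by exact_mod_cast hy
  have hgain := inv_sqrt_add_inv_sqrt_le_two_mul_abcWeight (p := deg G x + 1) (q := deg G y + 1)
    (by linarith) (by linarith)
  have hlx := mul_invSqrtDrop_lt (d := deg G x) (by linarith)
  have hly := mul_invSqrtDrop_lt (d := deg G y) (by linarith)
  rw [ABC_eq_sum_edgeFinset, ABC_eq_sum_edgeFinset, G.edgeFinset_sup_edge hn hxy, sum_cons, hnew]
  linarith

end AddEdge

section SplitGraph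

variable {β m : ℕ}

lemma deg_splitGraph_castAdd (i : Fin β) : deg (splitGraph (β + m) β) (Fin.castAdd m i) = m := by
  have : {w | (splitGraph (β + m) β).Adj (Fin.castAdd m i) w} = Set.range (Fin.natAdd β) := by
    rw [Fin.range_natAdd]
    ext w
    simp [splitGraph, Fin.ext_iff]
    omega
  rw [deg, this, Nat.card_range_of_injective (Fin.natAdd_injective _ _), Nat.card_eq_fintype_card,
    Fintype.card_fin]

lemma deg_splitGraph_natAdd (j : Fin m) :
    deg (splitGraph (β + m) β) (Fin.natAdd β j) = β + m - 1 := by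
  have : {w | (splitGraph (β + m) β).Adj (Fin.natAdd β j) w} = {w | w ≠ Fin.natAdd β j} := by
    ext w
    simp [splitGraph, eq_comm]
  rw [deg, this, Nat.card_eq_fintype_card, Set.card_ne_eq, Fintype.card_fin]

lemma ABC_splitGraph {n : ℕ} (hβn : β ≤ n) :
    ABC (splitGraph n β) = β * (n - β) * √((2 * n - β - 3) / ((n - β) * (n - 1))) +
      ((n - β) * (n - β - 1) / 2) * √((2 * n - 4) / ((n - 1) * (n - 1))) := by
  obtain ⟨m, rfl⟩ := Nat.exists_eq_add_of_le hβn
  have hd : ∀ j : Fin m, (deg (splitGraph (β + m) β) (Fin.natAdd β j) : ℝ) = β + m - 1 := by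
    intro j
    rw [deg_splitGraph_natAdd, Nat.cast_sub (by have := j.pos; omega)]
    push_cast
    ring
  rw [ABC]
  simp only [Fin.sum_univ_add, deg_splitGraph_castAdd, hd]
  have hlt : ∀ i : Fin β, ¬β ≤ (i : ℕ) := fun i => not_le.mpr i.isLt
  have hne : ∀ (i : Fin β) (j : Fin m), Fin.castAdd m i ≠ Fin.natAdd β j := fun i j h => by
    have := congrArg Fin.val h
    simp at this
    omega
  simp [splitGraph, hlt, hne, Ne.symm (hne _ _), Finset.sum_ite, Finset.filter_ne]
  rcases Nat.eq_zero_or_pos m with rfl | hm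
  · simp
  · rw [Nat.cast_sub hm]
    ring_nf

end SplitGraph

section Extremal

open SimpleGraph

variable {V : Type*} [Fintype V]

lemma one_le_deg_of_connected [Nontrivial V] {G : SimpleGraph V} (hG : G.Connected) (v : V) :
    1 ≤ deg G v := by
  classical
  rw [deg_eq_degree]
  exact hG.preconnected.degree_pos_of_nontrivial v

theorem ABC_lt_ABC_of_lt {G H : SimpleGraph V} (hG : G.Connected) (hlt : G < H) :
    ABC G < ABC H := by
  induction G using WellFoundedGT.induction with
  | _ G ih =>
  obtain ⟨x, y, hH, hn⟩ : ∃ x y, H.Adj x y ∧ ¬G.Adj x y := by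
    by_contra! h
    exact hlt.not_ge fun x y => h x y
  have : Nontrivial V := ⟨x, y, hH.ne⟩
  have hstep := ABC_lt_ABC_sup_edge hH.ne hn (one_le_deg_of_connected hG x)
    (one_le_deg_of_connected hG y)
  have hle : G ⊔ edge x y ≤ H := sup_le hlt.le ((edge_le_iff (G := H)).mpr (Or.inr hH))
  rcases hle.lt_or_eq with hlt' | rfl
  · exact hstep.trans (ih _ (G.lt_sup_edge x y hH.ne hn) (hG.mono le_sup_left) hlt')
  · exact hstep

theorem ABC_le_ABC_of_le {G H : SimpleGraph V} (hG : G.Connected) (hle : G ≤ H) :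
    ABC G ≤ ABC H := by
  rcases hle.lt_or_eq with hlt | rfl
  · exact (ABC_lt_ABC_of_lt hG hlt).le
  · rfl

end Extremal

lemma exists_isIndepSet_card_eq_indepNum {V : Type*} [Fintype V] (G : SimpleGraph V) :
    ∃ s : Finset V, G.IsIndepSet s ∧ s.card = indepNum G := by
  classical
  obtain ⟨s, -, hs⟩ := Finset.exists_mem_eq_sup Finset.univ Finset.univ_nonempty
    fun s : Finset V => if ∀ u ∈ s, ∀ v ∈ s, u ≠ v → ¬G.Adj u v then s.card else 0
  by_cases h : ∀ u ∈ s, ∀ v ∈ s, u ≠ v → ¬G.Adj u v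
  · exact ⟨s, h, by rw [indepNum, hs, if_pos h]⟩
  · exact ⟨∅, by simp, by rw [Finset.card_empty, indepNum, hs, if_neg h]⟩

lemma exists_iso_le_splitGraph {n β : ℕ} {G : SimpleGraph (Fin n)} {s : Finset (Fin n)}
    (hs : G.IsIndepSet s) (hcard : s.card = β) :
    ∃ G' : SimpleGraph (Fin n), Nonempty (G ≃g G') ∧ G' ≤ splitGraph n β := by
  have hβn : β ≤ n := hcard ▸ (s.card_le_univ.trans_eq (Fintype.card_fin n))
  obtain ⟨e⟩ : Nonempty ({v // v ∈ s} ≃ {v : Fin n // (v : ℕ) < β}) := by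
    refine Fintype.card_eq.mp ?_
    rw [Fintype.card_coe, hcard, Fintype.card_fin_lt_of_le hβn]
  refine ⟨G.map e.extendSubtype, ⟨SimpleGraph.Iso.map _ G⟩, ?_⟩
  rintro _ _ ⟨hne, a, b, hab, rfl, rfl⟩
  refine ⟨hne, ?_⟩
  by_contra! h
  have ha : a ∈ s := by_contra fun ha => e.extendSubtype_not_mem a ha (by omega)
  have hb : b ∈ s := by_contra fun hb => e.extendSubtype_not_mem b hb (by omega)
  exact hs ha hb hab.ne hab

theorem abc_max_indepNum {n β : ℕ} (G : SimpleGraph (Fin n))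
    (hconn : G.Connected) (hβ : indepNum G = β) :
    ABC G ≤ (β : ℝ) * ((n : ℝ) - β) *
        Real.sqrt ((2 * (n : ℝ) - β - 3) / (((n : ℝ) - β) * ((n : ℝ) - 1))) +
      (((n : ℝ) - β) * ((n : ℝ) - β - 1) / 2) *
        Real.sqrt ((2 * (n : ℝ) - 4) / (((n : ℝ) - 1) * ((n : ℝ) - 1))) ∧
    (ABC G = (β : ℝ) * ((n : ℝ) - β) *
        Real.sqrt ((2 * (n : ℝ) - β - 3) / (((n : ℝ) - β) * ((n : ℝ) - 1))) +
      (((n : ℝ) - β) * ((n : ℝ) - β - 1) / 2) *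
        Real.sqrt ((2 * (n : ℝ) - 4) / (((n : ℝ) - 1) * ((n : ℝ) - 1))) ↔
      Nonempty (G ≃g splitGraph n β)) := by
  obtain ⟨s, hs, hcard⟩ := exists_isIndepSet_card_eq_indepNum G
  have hβn : β ≤ n := hβ ▸ hcard ▸ (s.card_le_univ.trans_eq (Fintype.card_fin n))
  obtain ⟨G', ⟨φ⟩, hle⟩ := exists_iso_le_splitGraph hs (hcard.trans hβ)
  have hconn' : G'.Connected := φ.connected_iff.mp hconn
  rw [ABC_iso φ, ← ABC_splitGraph hβn]
  refine ⟨ABC_le_ABC_of_le hconn' hle, fun heq => ?_, fun ⟨ψ⟩ => ?_⟩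
  · rcases hle.lt_or_eq with hlt | rfl
    · exact absurd heq (ABC_lt_ABC_of_lt hconn' hlt).ne
    · exact ⟨φ⟩
  · rw [← ABC_iso φ, ABC_iso ψ]
end

section
/- Let G be a connected simple graph on n vertices with exactly p = n-2 pendent (degree-one) vertices, n ≥ 4. Then ABC(G) ≤ (n-3)·sqrt((n-3)/(n-2)) + sqrt(2), with equality iff G is the graph obtained by attaching n-3 pendent edges to one end of a path on three vertices. -/
/-- The graph obtained by attaching `n-3` pendent edges to one end of a path on three
vertices: path `0 - 1 - 2`, with pendent vertices `3, …, n-1` attached to vertex `0`. -/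
def Gprime (n : ℕ) : SimpleGraph (Fin n) where
  Adj u v := (u.val = 0 ∧ v.val = 1) ∨ (u.val = 1 ∧ v.val = 0) ∨
    (u.val = 1 ∧ v.val = 2) ∨ (u.val = 2 ∧ v.val = 1) ∨
    (u.val = 0 ∧ 3 ≤ v.val) ∨ (v.val = 0 ∧ 3 ≤ u.val)
  symm := ⟨by intro u v h; tauto⟩
  loopless := ⟨by
    intro u h
    rcases h with ⟨h1, h2⟩ | ⟨h1, h2⟩ | ⟨h1, h2⟩ | ⟨h1, h2⟩ | ⟨h1, h2⟩ | ⟨h1, h2⟩ <;> omega⟩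


/-!
Since exactly two vertices `u`, `v` are not leaves and `G` is connected, no two leaves are
adjacent and `u ~ v`; so `G` is the double star with `a ≥ 1` leaves at `u` and `b ≥ 1` at `v`,
`a + b = n - 2`. With `h x = x √(x / (x + 1))` its ABC index is
`h a + h b + √((a + b) / ((a + 1) (b + 1)))`. The last term is at most `√2 / 2 = h 1`, and
`h` is strictly convex, so `h a + h b ≤ h 1 + h (a + b - 1)`, with equality iff `a = 1` or
`b = 1`, i.e. iff `G` is `Gprime n`.
-/

open Real SimpleGraph

theorem StrictConvexOn.add_lt_add_of_lt_of_lt {𝕜 : Type*} [Field 𝕜] [LinearOrder 𝕜]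
    [IsStrictOrderedRing 𝕜] {s : Set 𝕜} {f : 𝕜 → 𝕜} (hf : StrictConvexOn 𝕜 s f)
    {x y a b : 𝕜} (hx : x ∈ s) (hy : y ∈ s) (hxa : x < a) (hxb : x < b)
    (hsum : a + b = x + y) : f a + f b < f x + f y := by
  have hxy : x < y := by linarith
  set θ := (a - x) / (y - x)
  have hθ : θ * (y - x) = a - x := div_mul_cancel₀ _ (by linarith)
  have hθ₀ : 0 < θ := div_pos (by linarith) (by linarith)
  have hθ₁ : θ < 1 := (div_lt_one (by linarith)).2 (by linarith)
  have ha := hf.2 hx hy hxy.ne (sub_pos.2 hθ₁) hθ₀ (by ring)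
  have hb := hf.2 hx hy hxy.ne hθ₀ (sub_pos.2 hθ₁) (by ring)
  rw [show (1 - θ) • x + θ • y = a by simp only [smul_eq_mul]; linear_combination hθ] at ha
  rw [show θ • x + (1 - θ) • y = b by simp only [smul_eq_mul]; linear_combination -hsum - hθ]
    at hb
  simp only [smul_eq_mul] at ha hb
  linarith

/-- The contribution of `x` pendent edges at a vertex of degree `x + 1` to the ABC index. -/
noncomputable def pendentTerm (x : ℝ) : ℝ := x * √(x / (x + 1))

-- The derivative is written as a square root so that its monotonicity is that of the radicand.
theorem hasDerivAt_pendentTerm {x : ℝ} (hx : 0 < x) :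
    HasDerivAt pendentTerm (√(x / (x + 1) * (1 + 1 / (2 * (x + 1))) ^ 2)) x := by
  have hx₁ : 0 < x + 1 := by linarith
  have hq : HasDerivAt (fun t => t / (t + 1)) (1 / (x + 1) ^ 2) x := by
    refine ((hasDerivAt_id x).div ((hasDerivAt_id x).add_const 1) hx₁.ne').congr_deriv ?_
    simp only [id]; field_simp; ring
  refine ((hasDerivAt_id x).mul (hq.sqrt (div_pos hx hx₁).ne')).congr_deriv ?_
  have hsq : √(x / (x + 1)) ^ 2 = x / (x + 1) := sq_sqrt (div_pos hx hx₁).le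
  rw [sqrt_mul (div_pos hx hx₁).le, sqrt_sq (by positivity)]
  simp only [id]
  field_simp
  rw [hsq]
  field_simp

theorem strictMonoOn_deriv_pendentTerm : StrictMonoOn (deriv pendentTerm) (Set.Ioi 0) := by
  intro x (hx : 0 < x) y (hy : 0 < y) hxy
  rw [(hasDerivAt_pendentTerm hx).deriv, (hasDerivAt_pendentTerm hy).deriv]
  refine sqrt_lt_sqrt (by positivity) ?_
  -- with `s = 1 / (t + 1)` the radicand is `(1 - s) (1 + s / 2) ^ 2 = 1 - s ^ 2 (3 + s) / 4`
  have hradicand : ∀ t : ℝ, 0 < t → t / (t + 1) * (1 + 1 / (2 * (t + 1))) ^ 2 =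
      1 - (1 / (t + 1)) ^ 2 * (3 + 1 / (t + 1)) / 4 := by
    intro t ht; field_simp; ring
  rw [hradicand x hx, hradicand y hy]
  have hs : 1 / (y + 1) < 1 / (x + 1) := one_div_lt_one_div_of_lt (by linarith) (by linarith)
  have hs₀ : 0 < 1 / (y + 1) := by positivity
  have := mul_lt_mul'' (pow_lt_pow_left₀ hs hs₀.le two_ne_zero) (add_lt_add_left hs 3)
    (by positivity) (by positivity)
  linarith

theorem strictConvexOn_pendentTerm : StrictConvexOn ℝ (Set.Ioi 0) pendentTerm :=
  StrictMonoOn.strictConvexOn_of_deriv (convex_Ioi 0)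
    (fun _ hx => (hasDerivAt_pendentTerm hx).continuousAt.continuousWithinAt)
    (by rw [interior_Ioi]; exact strictMonoOn_deriv_pendentTerm)

noncomputable def abcDoubleStar (a b : ℝ) : ℝ :=
  pendentTerm a + pendentTerm b + √((a + b) / ((a + 1) * (b + 1)))

theorem abcDoubleStar_comm (a b : ℝ) : abcDoubleStar a b = abcDoubleStar b a := by
  rw [abcDoubleStar, abcDoubleStar, add_comm (pendentTerm a), add_comm a, mul_comm (a + 1)]

theorem abcDoubleStar_one_right {c : ℝ} (hc : 0 ≤ c) :
    abcDoubleStar c 1 = pendentTerm c + √2 := by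
  have hhalf : √(1 / 2) = √2 / 2 := by
    rw [show (1 : ℝ) / 2 = 2 / 2 ^ 2 by norm_num, sqrt_div zero_le_two, sqrt_sq zero_le_two]
  have hbridge : (c + 1) / ((c + 1) * (1 + 1)) = 1 / 2 := by field_simp; norm_num
  simp only [abcDoubleStar, pendentTerm]
  rw [hbridge, one_mul, show (1 : ℝ) / (1 + 1) = 1 / 2 by norm_num, hhalf]
  ring

theorem abcDoubleStar_lt {a b : ℝ} (ha : 1 < a) (hb : 1 < b) :
    abcDoubleStar a b < pendentTerm (a + b - 1) + √2 := by
  have hconvex := strictConvexOn_pendentTerm.add_lt_add_of_lt_of_lt (x := 1) (y := a + b - 1)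
    (Set.mem_Ioi.2 one_pos) (Set.mem_Ioi.2 (by linarith)) ha hb (by ring)
  have hbridge : √((a + b) / ((a + 1) * (b + 1))) ≤ √((1 + 1) / ((1 + 1) * (1 + 1))) := by
    refine sqrt_le_sqrt ?_
    rw [div_le_div_iff₀ (by positivity) (by norm_num)]
    nlinarith [mul_pos (sub_pos.2 ha) (sub_pos.2 hb)]
  have h11 := abcDoubleStar_one_right zero_le_one
  rw [abcDoubleStar] at h11 ⊢
  linarith

theorem abcDoubleStar_eq_of_eq_one {a b : ℝ} (ha : 0 ≤ a) (hb : 0 ≤ b) (h : a = 1 ∨ b = 1) :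
    abcDoubleStar a b = pendentTerm (a + b - 1) + √2 := by
  rcases h with rfl | rfl
  · rw [abcDoubleStar_comm, abcDoubleStar_one_right hb, add_sub_cancel_left]
  · rw [abcDoubleStar_one_right ha, add_sub_cancel_right]

theorem abcDoubleStar_le {a b : ℝ} (ha : 1 ≤ a) (hb : 1 ≤ b) :
    abcDoubleStar a b ≤ pendentTerm (a + b - 1) + √2 := by
  rcases ha.eq_or_lt with rfl | ha'
  · exact (abcDoubleStar_eq_of_eq_one zero_le_one (by linarith) (.inl rfl)).le
  rcases hb.eq_or_lt with rfl | hb'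
  · exact (abcDoubleStar_eq_of_eq_one (by linarith) zero_le_one (.inr rfl)).le
  exact (abcDoubleStar_lt ha' hb').le

theorem abcDoubleStar_eq_iff {a b : ℝ} (ha : 1 ≤ a) (hb : 1 ≤ b) :
    abcDoubleStar a b = pendentTerm (a + b - 1) + √2 ↔ a = 1 ∨ b = 1 := by
  refine ⟨fun h => ?_, abcDoubleStar_eq_of_eq_one (by linarith) (by linarith)⟩
  by_contra! hne
  exact (abcDoubleStar_lt (ha.lt_of_ne hne.1.symm) (hb.lt_of_ne hne.2.symm)).ne h

section Degree

variable {V W : Type*} {G : SimpleGraph V} {H : SimpleGraph W}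

theorem deg_eq_sum [Fintype V] [DecidableRel G.Adj] (v : V) :
    deg G v = ∑ w, if G.Adj v w then 1 else 0 := by
  rw [deg, Nat.card_eq_fintype_card, ← Set.toFinset_card, Finset.sum_boole]
  congr
  ext
  simp

theorem deg_eq_one_iff {v : V} : deg G v = 1 ↔ ∃! w, G.Adj v w := by
  rw [deg, Nat.card_coe_set_eq, Set.ncard_eq_one]
  simp [Set.eq_singleton_iff_unique_mem, ExistsUnique]

theorem deg_congr (e : G ≃g H) (v : V) : deg H (e v) = deg G v :=
  Nat.card_congr (e.toEquiv.subtypeEquiv fun _ => e.map_adj_iff.symm).symm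

theorem ABC_congr [Fintype V] [Fintype W] (e : G ≃g H) : ABC G = ABC H := by
  rw [ABC, ABC]
  congr 1
  refine Fintype.sum_equiv e.toEquiv _ _ fun x => Fintype.sum_equiv e.toEquiv _ _ fun y => ?_
  rw [RelIso.coe_fn_toEquiv, deg_congr, deg_congr]
  classical exact if_congr e.map_adj_iff.symm rfl rfl

end Degree

/-- The centres of the double star are the two `none`s, its leaves the `some`s. -/
def doubleStar (α β : Type*) : SimpleGraph (Option α ⊕ Option β) :=
  (starGraph none ⊕g starGraph none) ⊔ edge (.inl none) (.inr none)

namespace doubleStar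

variable {α β : Type*}

@[simp] theorem adj_inl_inl {x y : Option α} :
    (doubleStar α β).Adj (.inl x) (.inl y) ↔ x ≠ y ∧ (x = none ∨ y = none) := by
  simp [doubleStar, starGraph_adj, edge_adj]

@[simp] theorem adj_inr_inr {x y : Option β} :
    (doubleStar α β).Adj (.inr x) (.inr y) ↔ x ≠ y ∧ (x = none ∨ y = none) := by
  simp [doubleStar, starGraph_adj, edge_adj]

@[simp] theorem adj_inl_inr {x : Option α} {y : Option β} :
    (doubleStar α β).Adj (.inl x) (.inr y) ↔ x = none ∧ y = none := by
  simp [doubleStar, edge_adj]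

@[simp] theorem adj_inr_inl {x : Option α} {y : Option β} :
    (doubleStar α β).Adj (.inr y) (.inl x) ↔ x = none ∧ y = none := by
  simp [doubleStar, edge_adj, and_comm]

def swap (α β : Type*) : doubleStar α β ≃g doubleStar β α :=
  ⟨Equiv.sumComm _ _, by rintro (x | x) (y | y) <;> simp [and_comm]⟩

variable [Fintype α] [Fintype β]

@[simp] theorem deg_inl_none : deg (doubleStar α β) (.inl none) = Fintype.card α + 1 := by
  classical
  simp only [deg_eq_sum, Fintype.sum_sum_type, Fintype.sum_option]
  simp [add_comm]

@[simp] theorem deg_inr_none : deg (doubleStar α β) (.inr none) = Fintype.card β + 1 := by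
  classical
  simp only [deg_eq_sum, Fintype.sum_sum_type, Fintype.sum_option]
  simp [add_comm]

@[simp] theorem deg_inl_some (a : α) : deg (doubleStar α β) (.inl (some a)) = 1 := by
  classical
  simp only [deg_eq_sum, Fintype.sum_sum_type, Fintype.sum_option]
  simp

@[simp] theorem deg_inr_some (b : β) : deg (doubleStar α β) (.inr (some b)) = 1 := by
  classical
  simp only [deg_eq_sum, Fintype.sum_sum_type, Fintype.sum_option]
  simp

theorem ABC_eq : ABC (doubleStar α β) = abcDoubleStar (Fintype.card α) (Fintype.card β) := by
  simp only [ABC, Fintype.sum_sum_type, Fintype.sum_option]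
  simp
  rw [abcDoubleStar, pendentTerm, pendentTerm]
  ring_nf

theorem nonempty_iso_Gprime {n : ℕ} (hn : 4 ≤ n) (hα : Fintype.card α = n - 3)
    (hβ : Fintype.card β = 1) : Nonempty (doubleStar α β ≃g Gprime n) := by
  let eα := Fintype.equivFinOfCardEq hα
  have : Subsingleton β := Fintype.card_le_one_iff_subsingleton.1 hβ.le
  let φ : Option α ⊕ Option β → Fin n :=
    Sum.elim (fun a => a.elim ⟨0, by omega⟩ fun a => ⟨eα a + 3, by omega⟩)
      (fun b => b.elim ⟨1, by omega⟩ fun _ => ⟨2, by omega⟩)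
  have hinj : φ.Injective := by
    rintro ((_ | a) | (_ | b)) ((_ | a') | (_ | b')) h <;>
      simp only [φ, Sum.elim_inl, Sum.elim_inr, Option.elim, Fin.ext_iff] at h
    all_goals first
      | rfl
      | omega
      | simp [eα.injective (Fin.ext (by omega : (eα a : ℕ) = eα a'))]
      | simp [Subsingleton.elim b b']
  have hbij : φ.Bijective := (Fintype.bijective_iff_injective_and_card φ).2 ⟨hinj, by
    simp only [Fintype.card_sum, Fintype.card_option, Fintype.card_fin, hα, hβ]; omega⟩
  refine ⟨⟨Equiv.ofBijective φ hbij, ?_⟩⟩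
  rintro ((_ | a) | (_ | b)) ((_ | a') | (_ | b')) <;> simp [φ, Gprime]

end doubleStar

theorem ABC_Gprime {n : ℕ} (hn : 4 ≤ n) : ABC (Gprime n) = pendentTerm (n - 3) + √2 := by
  obtain ⟨e⟩ := doubleStar.nonempty_iso_Gprime (α := Fin (n - 3)) (β := Fin 1) hn
    (by simp) (by simp)
  rw [← ABC_congr e, doubleStar.ABC_eq, Fintype.card_fin, Fintype.card_fin, Nat.cast_one,
    abcDoubleStar_one_right (Nat.cast_nonneg _), Nat.cast_sub (by omega)]
  norm_num

namespace doubleStar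

variable {α β : Type*} [Fintype α] [Fintype β]

theorem ABC_le {n : ℕ} (hcard : Fintype.card α + Fintype.card β + 2 = n)
    (hα : 1 ≤ Fintype.card α) (hβ : 1 ≤ Fintype.card β) :
    ABC (doubleStar α β) ≤ pendentTerm (n - 3) + √2 := by
  have hsum : (Fintype.card α : ℝ) + Fintype.card β - 1 = n - 3 := by
    rw [← hcard]; push_cast; ring
  rw [ABC_eq, ← hsum]
  exact abcDoubleStar_le (by exact_mod_cast hα) (by exact_mod_cast hβ)

theorem ABC_eq_iff {n : ℕ} (hn : 4 ≤ n) (hcard : Fintype.card α + Fintype.card β + 2 = n)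
    (hα : 1 ≤ Fintype.card α) (hβ : 1 ≤ Fintype.card β) :
    ABC (doubleStar α β) = pendentTerm (n - 3) + √2 ↔
      Nonempty (doubleStar α β ≃g Gprime n) := by
  refine ⟨fun h => ?_, fun ⟨g⟩ => by rw [ABC_congr g, ABC_Gprime hn]⟩
  have hsum : (Fintype.card α : ℝ) + Fintype.card β - 1 = n - 3 := by
    rw [← hcard]; push_cast; ring
  rw [ABC_eq, ← hsum, abcDoubleStar_eq_iff (by exact_mod_cast hα) (by exact_mod_cast hβ)] at h
  norm_cast at h
  rcases h with h | h
  · obtain ⟨g⟩ := nonempty_iso_Gprime (α := β) hn (by omega) h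
    exact ⟨(swap α β).trans g⟩
  · exact nonempty_iso_Gprime hn (by omega) h

end doubleStar

section TwoNonleaves

variable {V : Type*} {G : SimpleGraph V} {u v : V}

theorem SimpleGraph.Reachable.mem_of_adj_mem {C : Set V}
    (hC : ∀ x ∈ C, ∀ y, G.Adj x y → y ∈ C) {x y : V} (hxy : G.Reachable x y)
    (hx : x ∈ C) : y ∈ C := by
  obtain ⟨p⟩ := hxy
  induction p with
  | nil => exact hx
  | cons h _ ih => exact ih (hC _ hx _ h)

theorem SimpleGraph.adj_iff_eq_of_existsUnique {x w : V} (hx : ∃! y, G.Adj x y)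
    (hxw : G.Adj x w) {y : V} : G.Adj x y ↔ y = w :=
  ⟨fun hxy => hx.unique hxy hxw, fun h => h ▸ hxw⟩

theorem SimpleGraph.Connected.adj_of_existsUnique_adj (hG : G.Connected) (huv : u ≠ v)
    (hleaf : ∀ x, x ≠ u → x ≠ v → ∃! y, G.Adj x y) : G.Adj u v := by
  by_contra hnadj
  -- otherwise `u` and its neighbours, all leaves hanging at `u`, form a component
  have hclosed : ∀ x ∈ insert u {x | G.Adj u x}, ∀ y, G.Adj x y →
      y ∈ insert u {x | G.Adj u x} := by
    rintro x (rfl | hux) y hxy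
    · exact Or.inr hxy
    · have hx := hleaf x hux.ne.symm (fun h => hnadj (h ▸ hux))
      exact Or.inl ((adj_iff_eq_of_existsUnique hx hux.symm).1 hxy)
  rcases (hG u v).mem_of_adj_mem hclosed (Set.mem_insert u _) with h | h
  · exact huv h.symm
  · exact hnadj h

theorem SimpleGraph.Connected.eq_or_eq_of_adj (hG : G.Connected)
    (hleaf : ∀ x, x ≠ u → x ≠ v → ∃! y, G.Adj x y) {x y : V} (hxu : x ≠ u)
    (hxv : x ≠ v) (hxy : G.Adj x y) : y = u ∨ y = v := by
  by_contra! hy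
  -- two adjacent leaves would form a component
  have hx := hleaf x hxu hxv
  have hy' := hleaf y hy.1 hy.2
  have hclosed : ∀ z ∈ ({x, y} : Set V), ∀ w, G.Adj z w → w ∈ ({x, y} : Set V) := by
    rintro z (rfl | rfl) w hzw
    · exact Or.inr ((adj_iff_eq_of_existsUnique hx hxy).1 hzw)
    · exact Or.inl ((adj_iff_eq_of_existsUnique hy' hxy.symm).1 hzw)
  rcases (hG x u).mem_of_adj_mem hclosed (Set.mem_insert x _) with h | h
  · exact hxu h.symm
  · exact hy.1 h.symm

theorem SimpleGraph.Connected.exists_doubleStar_iso (hG : G.Connected) (huv : u ≠ v)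
    (hleaf : ∀ x, x ≠ u → x ≠ v → ∃! y, G.Adj x y) :
    ∃ e : doubleStar {x // G.Adj u x ∧ x ≠ v} {x // G.Adj v x ∧ x ≠ u} ≃g G,
      e (.inl none) = u ∧ e (.inr none) = v := by
  have hadj := hG.adj_of_existsUnique_adj huv hleaf
  have hα : ∀ a, G.Adj u a → a ≠ v → ∀ y, G.Adj a y ↔ y = u := fun a hua hav _ =>
    adj_iff_eq_of_existsUnique (hleaf a hua.ne.symm hav) hua.symm
  have hβ : ∀ b, G.Adj v b → b ≠ u → ∀ y, G.Adj b y ↔ y = v := fun b hvb hbu _ =>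
    adj_iff_eq_of_existsUnique (hleaf b hbu hvb.ne.symm) hvb.symm
  let φ : Option {x // G.Adj u x ∧ x ≠ v} ⊕ Option {x // G.Adj v x ∧ x ≠ u} → V :=
    Sum.elim (fun a => a.elim u Subtype.val) (fun b => b.elim v Subtype.val)
  have hinj : φ.Injective := by
    rintro ((_ | ⟨a, ha⟩) | (_ | ⟨b, hb⟩)) ((_ | ⟨a', ha'⟩) | (_ | ⟨b', hb'⟩)) h <;>
      simp only [φ, Sum.elim_inl, Sum.elim_inr, Option.elim] at h <;>
      grind [SimpleGraph.irrefl, SimpleGraph.adj_comm]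
  have hsurj : φ.Surjective := by
    intro x
    by_cases hxu : x = u
    · exact ⟨.inl none, hxu.symm⟩
    by_cases hxv : x = v
    · exact ⟨.inr none, hxv.symm⟩
    obtain ⟨y, hxy, -⟩ := hleaf x hxu hxv
    rcases hG.eq_or_eq_of_adj hleaf hxu hxv hxy with rfl | rfl
    · exact ⟨.inl (some ⟨x, hxy.symm, hxv⟩), rfl⟩
    · exact ⟨.inr (some ⟨x, hxy.symm, hxu⟩), rfl⟩
  refine ⟨⟨Equiv.ofBijective φ ⟨hinj, hsurj⟩, ?_⟩, rfl, rfl⟩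
  rintro ((_ | ⟨a, ha⟩) | (_ | ⟨b, hb⟩)) ((_ | ⟨a', ha'⟩) | (_ | ⟨b', hb'⟩)) <;>
    simp only [φ, Equiv.ofBijective_apply, Sum.elim_inl, Sum.elim_inr, Option.elim] <;>
    simp <;> grind [SimpleGraph.irrefl, SimpleGraph.adj_comm]

end TwoNonleaves

theorem exists_pair_not_of_card_setOf_eq_sub_two {α : Type*} [Finite α] {p : α → Prop}
    (hα : 2 ≤ Nat.card α) (hp : Nat.card {x | p x} = Nat.card α - 2) :
    ∃ u v, u ≠ v ∧ ¬p u ∧ ¬p v ∧ ∀ x, x ≠ u → x ≠ v → p x := by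
  have hcompl : {x | p x}ᶜ.ncard = 2 := by
    have := Set.ncard_add_ncard_compl {x | p x}
    rw [Nat.card_coe_set_eq] at hp
    omega
  obtain ⟨u, v, huv, h⟩ := Set.ncard_eq_two.1 hcompl
  have hmem : ∀ x, ¬p x ↔ x = u ∨ x = v := fun x => by simpa using Set.ext_iff.1 h x
  exact ⟨u, v, huv, (hmem u).2 (.inl rfl), (hmem v).2 (.inr rfl),
    fun x hxu hxv => not_not.1 fun hx => ((hmem x).1 hx).elim hxu hxv⟩

theorem abc_max_pendent_eq_n_sub_two {n : ℕ} (hn : 4 ≤ n) (G : SimpleGraph (Fin n))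
    (hconn : G.Connected) (hp : Nat.card {v | deg G v = 1} = n - 2) :
    ABC G ≤ ((n : ℝ) - 3) * Real.sqrt (((n : ℝ) - 3) / ((n : ℝ) - 2)) + Real.sqrt 2 ∧
    (ABC G = ((n : ℝ) - 3) * Real.sqrt (((n : ℝ) - 3) / ((n : ℝ) - 2)) + Real.sqrt 2 ↔
      Nonempty (G ≃g Gprime n)) := by
  classical
  obtain ⟨u, v, huv, hu, hv, hleaf⟩ :=
    exists_pair_not_of_card_setOf_eq_sub_two (α := Fin n) (by rw [Nat.card_fin]; omega)
      (by rwa [Nat.card_fin])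
  obtain ⟨e, heu, hev⟩ :=
    hconn.exists_doubleStar_iso huv fun x hxu hxv => deg_eq_one_iff.1 (hleaf x hxu hxv)
  have hdegu := deg_congr e (.inl none)
  have hdegv := deg_congr e (.inr none)
  rw [heu, doubleStar.deg_inl_none] at hdegu
  rw [hev, doubleStar.deg_inr_none] at hdegv
  have hcard := Fintype.card_congr e.toEquiv
  simp only [Fintype.card_sum, Fintype.card_option, Fintype.card_fin] at hcard
  have hbound : ((n : ℝ) - 3) * √((n - 3) / (n - 2)) + √2 = pendentTerm (n - 3) + √2 := by
    rw [pendentTerm]; ring_nf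
  rw [hbound, ← ABC_congr e]
  refine ⟨doubleStar.ABC_le (by omega) (by omega) (by omega),
    (doubleStar.ABC_eq_iff hn (by omega) (by omega) (by omega)).trans
      ⟨fun ⟨g⟩ => ⟨e.symm.trans g⟩, fun ⟨g⟩ => ⟨e.trans g⟩⟩⟩
end
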